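/- Let n = p^μ be a prime power with p ≥ 7, μ ≥ 2, and n ≥ 289. Let a ∈ {4, 5} and let b, c be integers with a ≤ b < c < n/2, c = a + b − 2, and ⌊b/a⌋ ≥ 11, such that (1, 1, c, n−b, n−a) is a minimal zero-sum sequence over Z/n. Then the sequence has index 1, i.e., there exists a unit m modulo n with |m|_n + |m|_n + |m·c|_n + |m·(n−b)|_n + |m·(n−a)|_n = n. -/

import Mathlib

/-!
Multiplying the sequence by `m` turns it into `(m, m, (a-2)m - t, t, n - am)` as soon as
`0 < m`, `am < n` and `mb ≡ -t (mod n)` with `0 < t < (a-2)m`; these residues sum to `n`.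

When `p ∤ b + 1`, pigeonholing the multiples of `b + 1` gives some `m ≤ (n-1)/a` with
`m(b+1) ≡ s (mod n)` and `|s| ≤ 5`, and `t = m - s` works unless `m ≤ |s|`. In that exceptional
case `n = kb + d` or `n + d = kb` with `k ≤ 5` and `d` small, and then `m = kq + 1`, resp.
`m = kq + k - 1`, works for `q ≈ b / d`, resp. `q ≈ b / (2k + d)`.
When `p ∣ b + 1`, put `g = gcd(b+1, n)` and take `m ≡ ((b+1)/g)⁻¹ (mod n/g)` in `(g, (n-1)/a]`,
so that `m(b+1) ≡ g (mod n)` and `t = m - g`.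
Each such `m` is prime to `p`: of two consecutive candidates `kq + r` one is, as they differ by
`k < p`; in the main case `p ∣ m` would force `p ∣ s` with `0 < |s| < p`; and in the last case
`m` is invertible modulo `n/g`, a multiple of `p`.
-/

/-- `lpr n x` is the least positive residue of `x` modulo `n` (in `[1, n]`). -/
def lpr (n x : ℕ) : ℕ := if x % n = 0 then n else x % n

def IsGoodMultiplier (n a b m : ℕ) : Prop :=
  0 < m ∧ a * m < n ∧ ∃ t, 0 < t ∧ t < (a - 2) * m ∧ n ∣ m * b + t

lemma lpr_add_mul {n x : ℕ} (k : ℕ) (hx : 0 < x) (hxn : x < n) : lpr n (x + n * k) = x := by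
  rw [lpr, Nat.add_mul_mod_self_left, Nat.mod_eq_of_lt hxn, if_neg hx.ne']

lemma lpr_of_lt {n x : ℕ} (hx : 0 < x) (hxn : x < n) : lpr n x = x := by
  simpa using lpr_add_mul 0 hx hxn

lemma IsGoodMultiplier.sum_lpr_eq {n a b c m : ℕ} (hm : IsGoodMultiplier n a b m) (ha : 3 ≤ a)
    (hbn : b < n) (hc : c = a + b - 2) :
    lpr n m + lpr n m + lpr n (m * c) + lpr n (m * (n - b)) + lpr n (m * (n - a)) = n := by
  obtain ⟨hm0, hman, t, ht0, htm, K, hK⟩ := hm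
  have hsplit : (a - 2) * m + 2 * m = a * m := by rw [← add_mul, Nat.sub_add_cancel (by omega)]
  have hKm : K ≤ m := by
    have : n * K < n * (m + 1) := by nlinarith [Nat.mul_lt_mul_of_pos_left hbn hm0]
    exact Nat.lt_succ_iff.mp (Nat.lt_of_mul_lt_mul_left this)
  have hmc : m * c = ((a - 2) * m - t) + n * K := by
    have : m * c = (a - 2) * m + m * b := by
      rw [hc, show a + b - 2 = (a - 2) + b by omega]
      ring
    omega
  have hmb : m * (n - b) = t + n * (m - K) := by
    have h1 : m * (n - b) + m * b = n * m := by
      rw [← mul_add, Nat.sub_add_cancel hbn.le, mul_comm]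
    have h2 : n * (m - K) + n * K = n * m := by rw [← mul_add, Nat.sub_add_cancel hKm]
    omega
  have hma : m * (n - a) = (n - a * m) + n * (m - 1) := by
    have h1 : m * (n - a) + a * m = n * m := by
      rw [mul_comm a, ← mul_add, Nat.sub_add_cancel (by nlinarith), mul_comm]
    have h2 : n * (m - 1) + n = n * m := by rw [← Nat.mul_add_one, Nat.sub_add_cancel hm0]
    omega
  rw [lpr_of_lt hm0 (by omega), hmc, lpr_add_mul _ (by omega) (by omega), hmb,
    lpr_add_mul _ ht0 (by omega), hma, lpr_add_mul _ (by omega) (by omega)]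
  omega

lemma isGoodMultiplier_of_mul_succ_eq_add {n a b m q s : ℕ} (ha : 4 ≤ a) (hman : a * m < n)
    (hsm : s < m) (h : m * (b + 1) = n * q + s) : IsGoodMultiplier n a b m := by
  have ham : 2 * m ≤ (a - 2) * m := Nat.mul_le_mul_right m (by omega)
  have : m * (b + 1) = m * b + m := by ring
  exact ⟨by omega, hman, m - s, by omega, by omega, q, by omega⟩

lemma isGoodMultiplier_of_mul_succ_add_eq {n a b m q e : ℕ} (hman : a * m < n) (he : 0 < e)
    (hme : m + e < (a - 2) * m) (h : m * (b + 1) + e = n * q) : IsGoodMultiplier n a b m := by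
  refine ⟨Nat.pos_of_ne_zero fun hm ↦ by simp [hm] at hme, hman, m + e, by omega, hme, q, ?_⟩
  have : m * (b + 1) = m * b + m := by ring
  omega

lemma isGoodMultiplier_of_mul_add_eq {n a b k d q : ℕ} (hn : k * b + d = n) (hq : b < d * q)
    (hcap : a * (k * q + 1) < n) (hslack : d * q < b + (a - 2) * (k * q + 1)) :
    IsGoodMultiplier n a b (k * q + 1) := by
  refine ⟨by omega, hcap, d * q - b, by omega, by omega, q, ?_⟩
  have : (k * q + 1) * b + d * q = n * q + b := by rw [← hn]; ring
  omega

lemma isGoodMultiplier_of_add_eq_mul {n a b k d q : ℕ} (hk : 0 < k) (hn : n + d = k * b)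
    (hq : d * (q + 1) < b) (hcap : a * (k * q + (k - 1)) < n)
    (hslack : b < d * (q + 1) + (a - 2) * (k * q + (k - 1))) :
    IsGoodMultiplier n a b (k * q + (k - 1)) := by
  refine ⟨?_, hcap, b - d * (q + 1), by omega, by omega, q + 1, ?_⟩
  · rcases Nat.eq_zero_or_pos (k * q + (k - 1)) with h0 | h0
    · rw [h0, mul_zero] at hslack
      omega
    · exact h0
  · obtain ⟨k, rfl⟩ : ∃ j, k = j + 1 := ⟨k - 1, by omega⟩
    have : ((k + 1) * q + (k + 1 - 1)) * b + b = n * (q + 1) + d * (q + 1) := by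
      rw [Nat.add_sub_cancel, ← add_mul, hn]
      ring
    omega

lemma le_of_dvd_of_add_eq {p x y s : ℕ} (hx : p ∣ x) (hy : p ∣ y) (h : x + s = y)
    (hs : 0 < s) : p ≤ s :=
  Nat.le_of_dvd hs ((Nat.dvd_add_right hx).mp (h ▸ hy))

lemma Nat.Prime.dvd_of_dvd_pow_of_ne_one {p μ h : ℕ} (hp : p.Prime) (hh : h ∣ p ^ μ)
    (h1 : h ≠ 1) : p ∣ h := by
  obtain ⟨i, -, rfl⟩ := (Nat.dvd_prime_pow hp).mp hh
  exact dvd_pow_self p (by rintro rfl; simp at h1)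

lemma not_dvd_prime_pow_of_lt {p q : ℕ} (μ : ℕ) (hp : p.Prime) (hq : q.Prime) (hqp : q < p) :
    ¬ q ∣ p ^ μ :=
  fun h ↦ hqp.ne ((Nat.prime_dvd_prime_iff_eq hq hp).mp (hq.dvd_of_dvd_pow h))

lemma exists_not_dvd_mul_add (Q r : ℕ) {p k : ℕ} (hk : 0 < k) (hkp : k < p) :
    ∃ q, Q + 1 ≤ q ∧ q ≤ Q + 2 ∧ ¬ p ∣ k * q + r := by
  by_cases h : p ∣ k * (Q + 1) + r
  · refine ⟨Q + 2, by omega, le_rfl, fun h' ↦ ?_⟩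
    have := le_of_dvd_of_add_eq h h' (by ring) hk
    omega
  · exact ⟨Q + 1, le_rfl, by omega, h⟩

lemma exists_add_mul_mem_Icc {r d lo hi : ℕ} (hr : r < d) (h : lo + d ≤ hi + 1) :
    ∃ s, r + d * s ∈ Set.Icc lo hi := by
  refine ⟨(lo + d - 1 - r) / d, ?_, ?_⟩ <;>
  · have := Nat.div_add_mod (lo + d - 1 - r) d
    have := Nat.mod_lt (lo + d - 1 - r) (show 0 < d by omega)
    omega

lemma exists_mul_mod_lt_or_lt_add {n x A w : ℕ} (hn : 0 < n) (hw : 0 < w) (hA : n / w < A) :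
    ∃ m, 0 < m ∧ m ≤ A ∧ (m * x % n < w ∨ n < m * x % n + w) := by
  have hmaps : ∀ i ∈ Finset.range (A + 1), i * x % n / w ∈ Finset.range (n / w + 1) :=
    fun i _ ↦ Finset.mem_range_succ_iff.mpr (Nat.div_le_div_right (Nat.mod_lt _ hn).le)
  obtain ⟨i, hi, j, hj, hij, hbucket⟩ :=
    Finset.exists_ne_map_eq_of_card_lt_of_maps_to (by simpa using hA) hmaps
  wlog hlt : i < j generalizing i j
  · exact this j hj i hi hij.symm hbucket.symm (by omega)
  refine ⟨j - i, by omega, by simp at hj; omega, ?_⟩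
  have hsum : j * x % n = (i * x % n + (j - i) * x % n) % n := by
    rw [← Nat.add_mod, ← add_mul, Nat.add_sub_cancel' hlt.le]
  have hr := Nat.mod_lt ((j - i) * x) hn
  have hvi := Nat.mod_lt (i * x) hn
  generalize i * x % n = vi, j * x % n = vj, (j - i) * x % n = r at hsum hbucket hr hvi
  have hclose : vi < vj + w ∧ vj < vi + w := by
    have := Nat.div_add_mod vi w
    have := Nat.div_add_mod vj w
    have := Nat.mod_lt vi hw
    have := Nat.mod_lt vj hw
    rw [hbucket] at *
    omega
  rcases lt_or_ge (vi + r) n with hwrap | hwrap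
  · rw [Nat.mod_eq_of_lt hwrap] at hsum
    omega
  · rw [Nat.mod_eq_sub_mod hwrap, Nat.mod_eq_of_lt (by omega)] at hsum
    omega

lemma five_mul_add_lt_mul {g h : ℕ} (hg : 7 ≤ g) (hh : 7 ≤ h) (hgh : 289 ≤ g * h) :
    5 * (g + h) < g * h := by
  rcases le_or_gt 18 h with hh18 | hh18
  · nlinarith
  · have : 17 ≤ g := by nlinarith
    nlinarith

lemma exists_isGoodMultiplier_of_dvd_succ {p μ n a b : ℕ} (hp : p.Prime) (hp7 : 7 ≤ p)
    (hn : n = p ^ μ) (hn289 : 289 ≤ n) (ha : 4 ≤ a) (ha5 : a ≤ 5) (hbn : b + 1 < n)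
    (hpb : p ∣ b + 1) : ∃ m, ¬ p ∣ m ∧ IsGoodMultiplier n a b m := by
  set g := Nat.gcd (b + 1) n
  set h := n / g
  set w := (b + 1) / g
  have hg0 : 0 < g := Nat.gcd_pos_of_pos_left n (by omega)
  have hgh : g * h = n := Nat.mul_div_cancel' (Nat.gcd_dvd_right _ _)
  have hgw : g * w = b + 1 := Nat.mul_div_cancel' (Nat.gcd_dvd_left _ _)
  have hpg : p ∣ g := Nat.dvd_gcd hpb (hp.dvd_of_dvd_pow_of_ne_one hn.dvd (by omega))
  have hph : p ∣ h := by
    refine hp.dvd_of_dvd_pow_of_ne_one ((Dvd.intro_left g hgh).trans hn.dvd) fun h1 ↦ ?_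
    have hgn : g = n := by simpa [h1] using hgh
    have : n ≤ b + 1 := Nat.le_of_dvd (by omega) (hgn ▸ Nat.gcd_dvd_left _ _)
    omega
  have hg7 : 7 ≤ g := hp7.trans (Nat.le_of_dvd hg0 hpg)
  have hh0 : 0 < h := Nat.div_pos (Nat.gcd_le_right _ (by omega)) hg0
  have hh7 : 7 ≤ h := hp7.trans (Nat.le_of_dvd hh0 hph)
  have hcap : (g + h) * a ≤ n - 1 := by
    have := five_mul_add_lt_mul hg7 hh7 (by omega)
    have : (g + h) * a ≤ (g + h) * 5 := Nat.mul_le_mul_left _ ha5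
    omega
  obtain ⟨m0, hm0h, hm0⟩ : ∃ m0 < h, w * m0 % h = 1 :=
    Nat.exists_mul_mod_eq_one_of_coprime (Nat.coprime_div_gcd_div_gcd hg0) (by omega)
  obtain ⟨s, hlo, hhi⟩ := exists_add_mul_mem_Icc hm0h (lo := g + 1) (hi := (n - 1) / a)
    (by have := (Nat.le_div_iff_mul_le (by omega)).mpr hcap; omega)
  set m := m0 + h * s
  have hwm : w * m % h = 1 := by
    rw [mul_add, ← mul_assoc, mul_comm w h, mul_assoc, Nat.add_mul_mod_self_left, hm0]
  set l := w * m / h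
  have hl : h * l + 1 = w * m := by rw [← hwm]; exact Nat.div_add_mod _ _
  have key : m * (b + 1) = n * l + g := by
    rw [← hgw, ← hgh]
    linear_combination g * hl.symm
  refine ⟨m, fun hpm ↦ ?_, isGoodMultiplier_of_mul_succ_eq_add ha ?_ (by omega) key⟩
  · have := le_of_dvd_of_add_eq (hph.mul_right l) (hpm.mul_left w) hl one_pos
    omega
  · have := (Nat.le_div_iff_mul_le (by omega)).mp hhi
    rw [mul_comm]
    omega

lemma exists_isGoodMultiplier_of_mul_succ_add_eq_of_small {p n a b m e q : ℕ} (hp7 : 7 ≤ p)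
    (hn2 : ¬ 2 ∣ n) (hn3 : ¬ 3 ∣ n) (hn5 : ¬ 5 ∣ n) (ha : a = 4 ∨ a = 5) (hb : 11 * a ≤ b)
    (hbn : 2 * b + 2 * a ≤ n + 3) (hm : 0 < m) (he : e ≤ 5) (hme : (a - 2) * m ≤ m + e)
    (h : m * (b + 1) + e = n * q) : ∃ m', ¬ p ∣ m' ∧ IsGoodMultiplier n a b m' := by
  have hm5 : m ≤ 5 := by
    have : 2 * m ≤ (a - 2) * m := Nat.mul_le_mul_right m (by omega)
    omega
  obtain rfl : q = 1 := by
    have : m * (b + 1) ≤ 5 * (b + 1) := Nat.mul_le_mul_right _ hm5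
    have : q < 3 := Nat.lt_of_mul_lt_mul_left (a := n) (by omega)
    interval_cases m <;> interval_cases e <;> interval_cases q <;> omega
  obtain ⟨q, hq1, hq2, hpq⟩ :=
    exists_not_dvd_mul_add (b / (m + e)) 1 hm (by omega : m < p)
  have hlo : b < (m + e) * q :=
    (Nat.lt_mul_div_succ b (by omega)).trans_le (Nat.mul_le_mul_left _ hq1)
  have hhi : (m + e) * q ≤ b + 2 * (m + e) := by
    have := Nat.mul_div_le b (m + e)
    have : (m + e) * q ≤ (m + e) * (b / (m + e) + 2) := Nat.mul_le_mul_left _ hq2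
    nlinarith
  refine ⟨m * q + 1, hpq, isGoodMultiplier_of_mul_add_eq (d := m + e) ?_ hlo ?_ ?_⟩
  · rw [← mul_one n, ← h]
    ring
  -- each of the finitely many `(m, e)` either makes `2`, `3` or `5` divide `n` or is a family
  -- `n = kb + d` for which the two bounds are linear in `b`
  all_goals
    clear hq1 hq2
    interval_cases m <;> interval_cases e <;> rcases ha with rfl | rfl <;> omega

lemma exists_isGoodMultiplier_of_mul_succ_eq_add_of_small {p n a b m r q : ℕ} (hp7 : 7 ≤ p)
    (hn2 : ¬ 2 ∣ n) (hn3 : ¬ 3 ∣ n) (hn5 : ¬ 5 ∣ n) (ha : a = 4 ∨ a = 5) (hb : 11 * a ≤ b)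
    (hbn : 2 * b + 2 * a ≤ n + 3) (hm : 0 < m) (hmr : m ≤ r) (hr : r ≤ 5)
    (h : m * (b + 1) = n * q + r) : ∃ m', ¬ p ∣ m' ∧ IsGoodMultiplier n a b m' := by
  have hm5 : m ≤ 5 := hmr.trans hr
  obtain rfl : q = 1 := by
    have : m * (b + 1) ≤ 5 * (b + 1) := Nat.mul_le_mul_right _ hm5
    have : q < 3 := Nat.lt_of_mul_lt_mul_left (a := n) (by omega)
    interval_cases m <;> interval_cases r <;> interval_cases q <;> omega
  obtain ⟨q, hq1, hq2, hpq⟩ :=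
    exists_not_dvd_mul_add (b / (m + r)) (m - 1) hm (by omega : m < p)
  have hlo : b < (m + r) * q :=
    (Nat.lt_mul_div_succ b (by omega)).trans_le (Nat.mul_le_mul_left _ hq1)
  have hhi : (m + r) * q ≤ b + 2 * (m + r) := by
    have := Nat.mul_div_le b (m + r)
    have : (m + r) * q ≤ (m + r) * (b / (m + r) + 2) := Nat.mul_le_mul_left _ hq2
    nlinarith
  refine ⟨m * q + (m - 1), hpq, isGoodMultiplier_of_add_eq_mul (d := r - m) hm ?_ ?_ ?_ ?_⟩
  all_goals
    clear hq1 hq2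
    interval_cases m <;> interval_cases r <;> rcases ha with rfl | rfl <;> omega

lemma exists_isGoodMultiplier_of_not_dvd_succ {p μ n a b : ℕ} (hp : p.Prime) (hp7 : 7 ≤ p)
    (hn : n = p ^ μ) (ha : a = 4 ∨ a = 5) (hb : 11 * a ≤ b) (hbn : 2 * b + 2 * a ≤ n + 3)
    (hpb : ¬ p ∣ b + 1) : ∃ m, ¬ p ∣ m ∧ IsGoodMultiplier n a b m := by
  have hn2 : ¬ 2 ∣ n := hn ▸ not_dvd_prime_pow_of_lt μ hp Nat.prime_two (by omega)
  have hn3 : ¬ 3 ∣ n := hn ▸ not_dvd_prime_pow_of_lt μ hp Nat.prime_three (by omega)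
  have hn5 : ¬ 5 ∣ n := hn ▸ not_dvd_prime_pow_of_lt μ hp Nat.prime_five (by omega)
  have hpn : p ∣ n := hp.dvd_of_dvd_pow_of_ne_one hn.dvd (by omega)
  have hcop : Nat.Coprime n (b + 1) := hn ▸ ((hp.coprime_iff_not_dvd).mpr hpb).pow_left μ
  obtain ⟨m, hm0, hmA, hr⟩ := exists_mul_mod_lt_or_lt_add (n := n) (x := b + 1) (w := 6)
    (A := (n - 1) / a) (by omega) (by norm_num) (by rcases ha with rfl | rfl <;> omega)
  have hman : a * m < n := by
    have := (Nat.le_div_iff_mul_le (by omega)).mp hmA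
    rw [mul_comm]
    omega
  have hdiv := Nat.div_add_mod (m * (b + 1)) n
  have hrn := Nat.mod_lt (m * (b + 1)) (show 0 < n by omega)
  generalize m * (b + 1) / n = q at hdiv
  generalize m * (b + 1) % n = r at hdiv hr hrn
  rcases hr with hlow | hhigh
  · have hr0 : r ≠ 0 := by
      rintro rfl
      have := Nat.le_of_dvd hm0 (hcop.dvd_of_dvd_mul_right ⟨q, by omega⟩)
      have : m ≤ a * m := Nat.le_mul_of_pos_left m (by omega)
      omega
    by_cases hrm : r < m
    · refine ⟨m, fun hpm ↦ ?_,
        isGoodMultiplier_of_mul_succ_eq_add (by omega) hman hrm hdiv.symm⟩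
      have := le_of_dvd_of_add_eq (hpn.mul_right q) (hpm.mul_right (b + 1)) hdiv (by omega)
      omega
    · exact exists_isGoodMultiplier_of_mul_succ_eq_add_of_small hp7 hn2 hn3 hn5 ha hb hbn hm0
        (by omega) (by omega) hdiv.symm
  · have h : m * (b + 1) + (n - r) = n * (q + 1) := by
      rw [mul_add_one n q]
      omega
    by_cases hme : m + (n - r) < (a - 2) * m
    · refine ⟨m, fun hpm ↦ ?_, isGoodMultiplier_of_mul_succ_add_eq hman (by omega) hme h⟩
      have := le_of_dvd_of_add_eq (hpm.mul_right (b + 1)) (hpn.mul_right (q + 1)) h (by omega)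
      omega
    · exact exists_isGoodMultiplier_of_mul_succ_add_eq_of_small hp7 hn2 hn3 hn5 ha hb hbn hm0
        (by omega) (by omega) h

lemma exists_isGoodMultiplier {p μ n a b : ℕ} (hp : p.Prime) (hp7 : 7 ≤ p) (hn : n = p ^ μ)
    (hn289 : 289 ≤ n) (ha : a = 4 ∨ a = 5) (hb : 11 * a ≤ b) (hbn : 2 * b + 2 * a ≤ n + 3) :
    ∃ m, ¬ p ∣ m ∧ IsGoodMultiplier n a b m := by
  by_cases hpb : p ∣ b + 1
  · exact exists_isGoodMultiplier_of_dvd_succ hp hp7 hn hn289 (by omega) (by omega) (by omega)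
      hpb
  · exact exists_isGoodMultiplier_of_not_dvd_succ hp hp7 hn ha hb hbn hpb

theorem stmt_9_general (p μ n a b c : ℕ) (hp : p.Prime) (hp7 : 7 ≤ p)
    (hn : n = p ^ μ) (hn289 : 289 ≤ n)
    (ha : a = 4 ∨ a = 5) (hc : 2 * c < n)
    (hcab : c = a + b - 2) (hs : 11 ≤ b / a) :
    ∃ m : ℕ, Nat.gcd m n = 1 ∧
      lpr n m + lpr n m + lpr n (m * c) + lpr n (m * (n - b)) +
        lpr n (m * (n - a)) = n := by
  have hb : 11 * a ≤ b := (Nat.mul_le_mul_right a hs).trans (Nat.div_mul_le_self b a)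
  obtain ⟨m, hpm, hm⟩ := exists_isGoodMultiplier hp hp7 hn hn289 ha hb (by omega)
  refine ⟨m, ?_, hm.sum_lpr_eq (by omega) (by omega) hcab⟩
  rw [hn]
  exact (Nat.coprime_comm.mp ((hp.coprime_iff_not_dvd).mpr hpm)).pow_right μ

theorem stmt_9 (p μ n a b c : ℕ) (hp : p.Prime) (hp7 : 7 ≤ p) (hμ : 2 ≤ μ)
    (hn : n = p ^ μ) (hn289 : 289 ≤ n)
    (ha : a = 4 ∨ a = 5) (hab : a ≤ b) (hbc : b < c) (hc : 2 * c < n)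
    (hcab : c = a + b - 2) (hs : 11 ≤ b / a)
    (hzs : n ∣ ∑ i, (![1, 1, c, n - b, n - a] : Fin 5 → ℕ) i)
    (hmin : ∀ s : Finset (Fin 5), s.Nonempty → s ≠ Finset.univ →
      ¬ n ∣ ∑ i ∈ s, (![1, 1, c, n - b, n - a] : Fin 5 → ℕ) i) :
    ∃ m : ℕ, Nat.gcd m n = 1 ∧
      lpr n m + lpr n m + lpr n (m * c) + lpr n (m * (n - b)) +
        lpr n (m * (n - a)) = n :=
  stmt_9_general p μ n a b c hp hp7 hn hn289 ha hc hcab hs
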